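/- (Stickelberger's eigenvalue theorem.) Let A be a finite-dimensional commutative ℂ-algebra and f ∈ A. Let L_f : A → A be the ℂ-linear map given by multiplication by f. Then the characteristic polynomial of L_f factors as det(λ·id − L_f) = ∏_φ (λ − φ(f))^{m(φ)}, where the product runs over all ℂ-algebra homomorphisms φ : A → ℂ, and m(φ) is the ℂ-dimension of the localization of A at the prime ideal ker φ. In particular, the set of eigenvalues of L_f is exactly {φ(f) : φ is a ℂ-algebra homomorphism A → ℂ}. -/

import Mathlib

/-!
A finite-dimensional algebra is Artinian, hence the product of its localizations at its finitely
many primes, and `L_f` is block diagonal for this decomposition. On the local factor at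
`ker φ` the maximal ideal is nilpotent, so `f - φ(f)` acts nilpotently and the block has
characteristic polynomial `(X - φ(f))^m(φ)`. Over the algebraically closed field `ℂ`, every prime
is the kernel of exactly one character `φ : A → ℂ`. The eigenvalues are the roots of the
characteristic polynomial, and every `m(φ)` is positive since a localization at a prime is
nontrivial.
-/

open Polynomial

universe u v

theorem LinearMap.charpoly_piMap {R : Type*} [CommRing R] {ι : Type u} [Fintype ι]
    {M : ι → Type v} [∀ i, AddCommGroup (M i)] [∀ i, Module R (M i)]
    [∀ i, Module.Finite R (M i)] [∀ i, Module.Free R (M i)] (f : ∀ i, Module.End R (M i)) :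
    (piMap f).charpoly = ∏ i, (f i).charpoly := by
  refine Fintype.induction_empty_option (P := fun ι _ => ∀ (M : ι → Type v)
    [∀ i, AddCommGroup (M i)] [∀ i, Module R (M i)] [∀ i, Module.Finite R (M i)]
    [∀ i, Module.Free R (M i)] (f : ∀ i, Module.End R (M i)),
    (piMap f).charpoly = ∏ i, (f i).charpoly) ?_ ?_ ?_ ι M f
  · intro ι κ _ e ih M _ _ _ _ f
    let := Fintype.ofEquiv κ e.symm
    rw [← Fintype.prod_equiv e (fun i => (f (e i)).charpoly) _ fun _ => rfl, ← ih,
      ← (LinearEquiv.piCongrLeft R M e).charpoly_conj]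
    congr 1
    ext x k
    obtain ⟨i, rfl⟩ := e.surjective k
    simp only [LinearEquiv.conj_apply, coe_piMap, coe_comp, LinearEquiv.coe_coe,
      Function.comp_apply]
    change _ = Equiv.piCongrLeft M e (Pi.map _ ((Equiv.piCongrLeft M e).symm x)) (e i)
    rw [Equiv.piCongrLeft_apply_apply]
    simp
  · intro M _ _ _ _ f
    classical
    rw [← charpoly_toMatrix (piMap f) (Pi.basis fun i => Module.Free.chooseBasis R (M i)),
      Matrix.charpoly, Matrix.det_isEmpty, Fintype.prod_empty]
  · intro ι _ ih M _ _ _ _ f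
    rw [Fintype.prod_option, ← ih, ← charpoly_prodMap,
      ← (LinearEquiv.piOptionEquivProd R).charpoly_conj]
    congr 1

theorem LinearMap.mulLeft_pi {R ι : Type*} {A : ι → Type*} [CommSemiring R] [∀ i, Semiring (A i)]
    [∀ i, Algebra R (A i)] (x : ∀ i, A i) :
    mulLeft R x = piMap fun i => mulLeft R (x i) :=
  rfl

theorem LinearMap.charpoly_eq_X_sub_C_pow_of_isNilpotent_sub_smul {R M : Type*} [CommRing R]
    [IsDomain R] [AddCommGroup M] [Module R M] [Module.Finite R M] [Module.Free R M]
    {f : Module.End R M} {c : R} (h : IsNilpotent (f - c • 1)) :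
    f.charpoly = (X - C c) ^ Module.finrank R M := by
  have hcomp := charpoly_sub_smul f c
  rw [h.charpoly_eq_X_pow_finrank] at hcomp
  calc f.charpoly = (f.charpoly.comp (X + C c)).comp (X - C c) := by
        simp [Polynomial.comp_assoc]
    _ = (X - C c) ^ Module.finrank R M := by simp [← hcomp]

theorem LinearMap.charpoly_mulLeft_of_isNilpotent_sub_algebraMap {R B : Type*} [CommRing R]
    [IsDomain R] [Ring B] [Algebra R B] [Module.Finite R B] [Module.Free R B] {y : B} {c : R}
    (h : IsNilpotent (y - algebraMap R B c)) :
    (mulLeft R y).charpoly = (X - C c) ^ Module.finrank R B := by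
  refine charpoly_eq_X_sub_C_pow_of_isNilpotent_sub_smul ?_
  have hsub : mulLeft R y - c • 1 = Algebra.lmul R B (y - algebraMap R B c) := by
    ext x
    simp [Algebra.smul_def]
  rw [hsub]
  exact h.map _

instance Localization.finite_of_moduleFinite {K A : Type*} [Field K] [CommRing A] [Algebra K A]
    [Module.Finite K A] (S : Submonoid A) : Module.Finite K (Localization S) :=
  have := IsArtinianRing.of_finite K A
  .of_surjective (IsScalarTower.toAlgHom K A (Localization S)).toLinearMap
    (IsArtinianRing.localization_surjective S _)

theorem LinearMap.charpoly_mulLeft_eq_prod_atPrime {K A : Type*} [Field K] [CommRing A]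
    [Algebra K A] [Module.Finite K A] [Fintype (PrimeSpectrum A)] (f : A) :
    (mulLeft K f).charpoly =
      ∏ p : PrimeSpectrum A,
        (mulLeft K (algebraMap A (Localization.AtPrime p.asIdeal) f)).charpoly := by
  have := IsArtinianRing.of_finite K A
  let e := (PrimeSpectrum.toPiLocalizationEquiv A).restrictScalars K
  rw [← e.toLinearEquiv.charpoly_conj, e.linearEquivConj_mulLeft, mulLeft_pi, charpoly_piMap]
  rfl

theorem isNilpotent_algebraMap_sub_algebraMap_atPrime_ker {K A : Type*} [CommRing K] [IsDomain K]
    [CommRing A] [Algebra K A] [IsArtinianRing A] (φ : A →ₐ[K] K) (f : A) :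
    haveI := RingHom.ker_isPrime φ
    IsNilpotent (algebraMap A (Localization.AtPrime (RingHom.ker φ)) f -
      algebraMap K (Localization.AtPrime (RingHom.ker φ)) (φ f)) := by
  have := RingHom.ker_isPrime φ
  rw [Ring.KrullDimLE.isNilpotent_iff_mem_maximalIdeal, IsScalarTower.algebraMap_apply K A,
    ← map_sub, IsLocalization.AtPrime.to_map_mem_maximal_iff _ (RingHom.ker φ)]
  simp

theorem charpoly_mulLeft_algebraMap_atPrime_ker {K A : Type*} [Field K] [CommRing A]
    [Algebra K A] [Module.Finite K A] (φ : A →ₐ[K] K) (f : A) :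
    haveI := RingHom.ker_isPrime φ
    (LinearMap.mulLeft K (algebraMap A (Localization.AtPrime (RingHom.ker φ)) f)).charpoly =
      (X - C (φ f)) ^ Module.finrank K (Localization.AtPrime (RingHom.ker φ)) :=
  have := IsArtinianRing.of_finite K A
  LinearMap.charpoly_mulLeft_of_isNilpotent_sub_algebraMap
    (isNilpotent_algebraMap_sub_algebraMap_atPrime_ker φ f)

theorem AlgHom.eq_of_ker_eq {R A : Type*} [CommRing R] [Ring A] [Algebra R A] {φ ψ : A →ₐ[R] R}
    (h : RingHom.ker φ = RingHom.ker ψ) : φ = ψ := by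
  ext a
  have : a - algebraMap R A (ψ a) ∈ RingHom.ker φ := by
    rw [h]
    simp
  simpa [sub_eq_zero] using this

theorem IsAlgClosed.exists_algHom_ker_eq {K A : Type*} [Field K] [IsAlgClosed K] [CommRing A]
    [Algebra K A] [Algebra.IsIntegral K A] (p : Ideal A) [p.IsPrime] :
    ∃ φ : A →ₐ[K] K, RingHom.ker φ = p := by
  let ε : K ≃ₐ[K] A ⧸ p :=
    .ofBijective (Algebra.ofId K _) IsAlgClosed.algebraMap_bijective_of_isIntegral
  refine ⟨(ε.symm : A ⧸ p →ₐ[K] K).comp (Ideal.Quotient.mkₐ K p), ?_⟩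
  ext a
  simp [RingHom.mem_ker, Ideal.Quotient.eq_zero_iff_mem]

noncomputable def IsAlgClosed.algHomEquivPrimeSpectrum (K A : Type*) [Field K] [IsAlgClosed K]
    [CommRing A] [Algebra K A] [Algebra.IsIntegral K A] : (A →ₐ[K] K) ≃ PrimeSpectrum A :=
  .ofBijective (fun φ => ⟨RingHom.ker φ, RingHom.ker_isPrime φ⟩)
    ⟨fun _ _ h => AlgHom.eq_of_ker_eq congr(($h).asIdeal),
      fun p => (exists_algHom_ker_eq p.asIdeal).imp fun _ h => PrimeSpectrum.ext h⟩

/-- **Stickelberger's eigenvalue theorem.**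
Let `A` be a finite-dimensional commutative `ℂ`-algebra and `f ∈ A`.  The characteristic
polynomial of the multiplication map `L_f : A → A` factors as
`∏_φ (λ − φ(f))^{m(φ)}`, the product over all `ℂ`-algebra homomorphisms `φ : A → ℂ`,
where `m(φ)` is the `ℂ`-dimension of the localization of `A` at the prime `ker φ`.
In particular the eigenvalues of `L_f` are exactly the values `φ(f)`. -/
theorem stickelberger_charpoly_factorization
    (A : Type*) [CommRing A] [Algebra ℂ A] [FiniteDimensional ℂ A] (f : A) :
    (LinearMap.mulLeft ℂ f).charpoly =
        (∏ᶠ φ : A →ₐ[ℂ] ℂ,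
          haveI : (RingHom.ker φ).IsPrime := RingHom.ker_isPrime φ
          (X - C (φ f)) ^ Module.finrank ℂ (Localization.AtPrime (RingHom.ker φ))) ∧
      ∀ μ : ℂ, Module.End.HasEigenvalue (LinearMap.mulLeft ℂ f) μ ↔
        ∃ φ : A →ₐ[ℂ] ℂ, φ f = μ := by
  have := IsArtinianRing.of_finite ℂ A
  let e := IsAlgClosed.algHomEquivPrimeSpectrum ℂ A
  let := Fintype.ofFinite (PrimeSpectrum A)
  let := Fintype.ofEquiv _ e.symm
  have hchar : (LinearMap.mulLeft ℂ f).charpoly = ∏ φ : A →ₐ[ℂ] ℂ,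
      haveI := RingHom.ker_isPrime φ
      (X - C (φ f)) ^ Module.finrank ℂ (Localization.AtPrime (RingHom.ker φ)) := by
    rw [LinearMap.charpoly_mulLeft_eq_prod_atPrime, ← e.prod_comp]
    exact Finset.prod_congr rfl fun φ _ => charpoly_mulLeft_algebraMap_atPrime_ker φ f
  refine ⟨by rw [hchar, finprod_eq_prod_of_fintype], fun μ => ?_⟩
  rw [Module.End.hasEigenvalue_iff_isRoot_charpoly, hchar]
  simp only [IsRoot, eval_prod, eval_pow, eval_sub, eval_X, eval_C, Finset.prod_eq_zero_iff,
    Finset.mem_univ, true_and, pow_eq_zero_iff Module.finrank_pos.ne', sub_eq_zero]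
  exact exists_congr fun φ => eq_comm
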